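/- For every integer Δ ≥ 29, there exist a connected finite simple graph G with maximum degree at most Δ and an orientation G→ of G whose pushable chromatic number satisfies χ_p(G→) ≥ 2^(Δ/2 − 1) (as a real-number inequality). -/

import Mathlib

/-- An oriented graph: a loopless directed graph without opposite arcs. -/
structure OrientedGraph (V : Type*) where
  adj : V → V → Prop
  irrefl' : ∀ v, ¬ adj v v
  asymm' : ∀ u v, adj u v → ¬ adj v u

namespace OrientedGraph

variable {V W : Type*}

/-- Pushing a set `S` of vertices reverses every arc with exactly one endpoint in `S`. -/
def push (G : OrientedGraph V) (S : Set V) : OrientedGraph V where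
  adj u v := ((u ∈ S ↔ v ∈ S) ∧ G.adj u v) ∨ (¬(u ∈ S ↔ v ∈ S) ∧ G.adj v u)
  irrefl' v := by
    rintro (⟨_, h⟩ | ⟨h, _⟩)
    · exact G.irrefl' v h
    · exact h Iff.rfl
  asymm' u v := by
    rintro (⟨h1, h2⟩ | ⟨h1, h2⟩) (⟨h3, h4⟩ | ⟨h3, h4⟩)
    · exact G.asymm' u v h2 h4
    · exact h3 h1.symm
    · exact h1 h3.symm
    · exact G.asymm' v u h2 h4

/-- A homomorphism of oriented graphs. -/
def IsHom (G : OrientedGraph V) (H : OrientedGraph W) (f : V → W) : Prop :=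
  ∀ u v, G.adj u v → H.adj (f u) (f v)

/-- A pushable homomorphism: a homomorphism from some graph obtained from `G`
by pushing a set of vertices. -/
def IsPushableHom (G : OrientedGraph V) (H : OrientedGraph W) (f : V → W) : Prop :=
  ∃ S : Set V, IsHom (G.push S) H f

/-- The underlying (simple) undirected graph of an oriented graph. -/
def toSimpleGraph (G : OrientedGraph V) : SimpleGraph V where
  Adj u v := G.adj u v ∨ G.adj v u
  symm := ⟨fun _ _ h => Or.symm h⟩
  loopless := ⟨fun v h => h.elim (G.irrefl' v) (G.irrefl' v)⟩

/-- The oriented chromatic number: the least order of an oriented graph that `G`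
admits a homomorphism to. -/
noncomputable def orientedChromatic (G : OrientedGraph V) : ℕ :=
  sInf {n | ∃ (H : OrientedGraph (Fin n)) (f : V → Fin n), IsHom G H f}

/-- The pushable chromatic number: the least order of an oriented graph that `G`
admits a pushable homomorphism to. -/
noncomputable def pushableChromatic (G : OrientedGraph V) : ℕ :=
  sInf {n | ∃ (H : OrientedGraph (Fin n)) (f : V → Fin n), IsPushableHom G H f}

/-- `signedAdj C true u w` means `w ∈ N⁺(u)`; `signedAdj C false u w` means `w ∈ N⁻(u)`. -/
def signedAdj (C : OrientedGraph V) : Bool → V → V → Prop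
  | true, u, w => C.adj u w
  | false, u, w => C.adj w u

/-- The `s`-neighborhood of a set of vertices. -/
def signedNbhd (C : OrientedGraph V) (s : Bool) (S : Set V) : Set V :=
  {w | ∃ u ∈ S, C.signedAdj s u w}

/-- The set `N^a(J)` for a sign vector `a` and a tuple `v` of vertices. -/
def NSet (C : OrientedGraph V) {j : ℕ} (a : Fin j → Bool) (v : Fin j → V) : Set V :=
  {w | (∀ i, C.signedAdj (a i) (v i) w) ∨ (∀ i, C.signedAdj (!(a i)) (v i) w)}

/-- Property `P(j,k)`: for every sign vector `a ∈ {+,-}^j` and every set of `j`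
distinct vertices, `|N^a(J)| ≥ k`. -/
def HasPropP (C : OrientedGraph V) (j k : ℕ) : Prop :=
  ∀ (a : Fin j → Bool) (v : Fin j → V), Function.Injective v → k ≤ (C.NSet a v).ncard

end OrientedGraph

/-- The Paley tournament on `ZMod 7`: `ij` is an arc iff `j - i ∈ {1, 2, 4}`. -/
def Pal7 : OrientedGraph (ZMod 7) where
  adj i j := j - i = 1 ∨ j - i = 2 ∨ j - i = 4
  irrefl' := by decide
  asymm' := by decide

/-- `mad(G) < 3`: every nonempty subgraph `H` satisfies `2|E(H)|/|V(H)| < 3`. -/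
def MadLT3 {V : Type*} (G : SimpleGraph V) : Prop :=
  ∀ H : G.Subgraph, H.verts.Nonempty → 2 * H.edgeSet.ncard < 3 * H.verts.ncard

/-- Degeneracy at most `d`: every nonempty set of vertices contains a vertex with
at most `d` neighbors inside the set. -/
def DegeneracyLE {V : Type*} (G : SimpleGraph V) (d : ℕ) : Prop :=
  ∀ s : Set V, s.Nonempty → ∃ v ∈ s, (s ∩ G.neighborSet v).ncard ≤ d

/-!
A counting argument. In the bipartite circulant graph on `ZMod n ⊕ ZMod n` joining `inl a` to
`inr (a + l)` for `l < Δ` (connected and `Δ`-regular, `2n` vertices, `nΔ` edges) there are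
`2^(nΔ) = (2^Δ)^n` orientations. A pushable homomorphism `f` to an oriented graph `H` on `k`
vertices pushing `S` determines the orientation it comes from: the arc between `u` and `v` points
from `u` to `v` iff `f u → f v` is an arc of `H` exactly when `u` and `v` lie on the same side of
`S`. For `k ≤ L` there are at most `(L + 1) 2^(L²) (2L)^(2n)` such triples `(H, f, S)`, which is
eventually smaller than `(2^Δ)^n` as soon as `4L² < 2^Δ`. So some orientation has pushable
chromatic number greater than `L`, and `L = ⌈2^(Δ/2 - 1)⌉ - 1` satisfies `4L² < 2^Δ`.
-/

theorem Set.ncard_le_of_subset_range {α ι : Type*} [Finite ι] {s : Set α} {f : ι → α}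
    (h : s ⊆ Set.range f) : s.ncard ≤ Nat.card ι :=
  (Set.ncard_le_ncard h (Set.finite_range f)).trans <| by
    rw [← Nat.card_coe_set_eq]; exact Finite.card_range_le f

theorem ZMod.add_natCast_fin_injective {n Δ : ℕ} (hΔ : Δ ≤ n) (a : ZMod n) :
    Function.Injective fun l : Fin Δ => a + ((l : ℕ) : ZMod n) := by
  intro l l' h
  have := congrArg ZMod.val (add_left_cancel h)
  rw [ZMod.val_cast_of_lt (by omega), ZMod.val_cast_of_lt (by omega)] at this
  exact Fin.ext this

open Filter in
theorem Nat.eventually_mul_pow_lt_pow (C : ℕ) {c d : ℕ} (h : c < d) :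
    ∀ᶠ k in atTop, C * c ^ k < d ^ k := by
  have hlittle := (isLittleO_pow_pow_of_lt_left (Nat.cast_nonneg c)
    (Nat.cast_lt.mpr h : (c : ℝ) < d)).const_mul_left (C : ℝ)
  filter_upwards [hlittle.def (half_pos one_pos)] with k hk
  have hd : (0 : ℝ) < (d : ℝ) ^ k := pow_pos (Nat.cast_pos.mpr (c.zero_le.trans_lt h)) k
  rw [Real.norm_of_nonneg (by positivity), Real.norm_of_nonneg hd.le] at hk
  exact_mod_cast (hk.trans_lt (by linarith) : (C : ℝ) * c ^ k < d ^ k)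

theorem Finset.sum_range_succ_two_pow_mul_le (L m : ℕ) :
    ∑ k ∈ Finset.range (L + 1), 2 ^ (k * k) * (2 * k) ^ m ≤
      (L + 1) * (2 ^ (L * L) * (2 * L) ^ m) := by
  have hterm : ∀ k ∈ Finset.range (L + 1),
      2 ^ (k * k) * (2 * k) ^ m ≤ 2 ^ (L * L) * (2 * L) ^ m := fun k hk => by
    have := Finset.mem_range_succ_iff.mp hk
    gcongr
    exact one_le_two
  simpa using Finset.sum_le_card_nsmul _ _ _ hterm

namespace OrientedGraph

section PushableColoring

variable {V W : Type*}

def comap (G : OrientedGraph V) (e : W → V) : OrientedGraph W where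
  adj a b := G.adj (e a) (e b)
  irrefl' a := G.irrefl' (e a)
  asymm' a b := G.asymm' (e a) (e b)

theorem exists_isPushableHom_fin_card [Fintype V] (G : OrientedGraph V) :
    ∃ (H : OrientedGraph (Fin (Fintype.card V))) (f : V → Fin (Fintype.card V)),
      IsPushableHom G H f := by
  refine ⟨G.comap (Fintype.equivFin V).symm, Fintype.equivFin V, ∅, fun u v huv => ?_⟩
  simpa [comap, push] using huv

theorem exists_isPushableHom_fin_pushableChromatic [Fintype V] (G : OrientedGraph V) :
    ∃ (H : OrientedGraph (Fin G.pushableChromatic)) (f : V → Fin G.pushableChromatic),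
      IsPushableHom G H f :=
  Nat.sInf_mem (s := {n | ∃ (H : OrientedGraph (Fin n)) (f : V → Fin n), IsPushableHom G H f})
    ⟨_, G.exists_isPushableHom_fin_card⟩

open Classical in
theorem signedAdj_eq_decide_of_isHom_push {G : OrientedGraph V} {H : OrientedGraph W}
    {f : V → W} {S : Set V} (hf : IsHom (G.push S) H f) {s : Bool} {u v : V}
    (huv : G.signedAdj s u v) : s = decide (H.adj (f u) (f v) ↔ (u ∈ S ↔ v ∈ S)) := by
  cases s <;> by_cases hS : u ∈ S ↔ v ∈ S
  · have := hf v u (Or.inl ⟨hS.symm, huv⟩)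
    simp [hS, H.asymm' _ _ this]
  · have := hf u v (Or.inr ⟨hS, huv⟩)
    simp [hS, this]
  · have := hf u v (Or.inl ⟨hS, huv⟩)
    simp [hS, this]
  · have := hf v u (Or.inr ⟨fun h => hS h.symm, huv⟩)
    simp [hS, H.asymm' _ _ this]

theorem exists_lt_pushableChromatic_of_card_lt {E : Type*} [Fintype V] [Fintype E]
    (G : (E → Bool) → OrientedGraph V) (e₀ e₁ : E → V)
    (hG : ∀ σ i, (G σ).signedAdj (σ i) (e₀ i) (e₁ i)) (L : ℕ)
    (hcard : ∑ k ∈ Finset.range (L + 1), 2 ^ (k * k) * (2 * k) ^ Fintype.card V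
      < 2 ^ Fintype.card E) :
    ∃ σ, L < (G σ).pushableChromatic := by
  classical
  by_contra! hχ
  choose H f S hf using fun σ => (G σ).exists_isPushableHom_fin_pushableChromatic
  let Coloring :=
    Σ k : Fin (L + 1), (Fin k → Fin k → Bool) × (V → Fin k) × (V → Bool)
  let coloring (σ : E → Bool) : Coloring :=
    ⟨⟨_, Nat.lt_succ_of_le (hχ σ)⟩, fun a b => decide ((H σ).adj a b), f σ,
      (· ∈ S σ)⟩
  let orientation (c : Coloring) (i : E) : Bool :=
    decide (c.2.1 (c.2.2.1 (e₀ i)) (c.2.2.1 (e₁ i)) = true ↔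
      c.2.2.2 (e₀ i) = c.2.2.2 (e₁ i))
  have hinv : Function.LeftInverse orientation coloring := fun σ => funext fun i => by
    rw [signedAdj_eq_decide_of_isHom_push (hf σ) (hG σ i)]
    simp [orientation, coloring]
  have hcard_coloring : Fintype.card Coloring =
      ∑ k ∈ Finset.range (L + 1), 2 ^ (k * k) * (2 * k) ^ Fintype.card V := by
    rw [Fintype.card_sigma, ← Fin.sum_univ_eq_sum_range]
    refine Finset.sum_congr rfl fun k _ => ?_
    simp only [Fintype.card_prod, Fintype.card_fun, Fintype.card_fin, Fintype.card_bool]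
    ring
  have := Fintype.card_le_of_injective _ hinv.injective
  simp only [Fintype.card_fun, Fintype.card_bool, hcard_coloring] at this
  omega

end PushableColoring

section Bipartite

variable {A B L : Type*}

/-- The edge `(a, l)` joins `inl a` to `inr (nbr a l)`; it points to the right iff `σ (a, l)`. -/
def bipartiteOrientation (nbr : A → L → B) (hnbr : ∀ a, Function.Injective (nbr a))
    (σ : A × L → Bool) : OrientedGraph (A ⊕ B) where
  adj
    | .inl a, .inr b => ∃ l, nbr a l = b ∧ σ (a, l) = true
    | .inr b, .inl a => ∃ l, nbr a l = b ∧ σ (a, l) = false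
    | _, _ => False
  irrefl' v := by cases v <;> simp
  asymm' u v := by
    rcases u with a | b <;> rcases v with a' | b'
    · exact False.elim
    · rintro ⟨l, rfl, hl⟩ ⟨l', hl', hl'σ⟩
      rw [hnbr a hl'] at hl'σ
      simp [hl] at hl'σ
    · rintro ⟨l, rfl, hl⟩ ⟨l', hl', hl'σ⟩
      rw [hnbr a' hl'] at hl'σ
      simp [hl] at hl'σ
    · exact False.elim

variable (nbr : A → L → B) (hnbr : ∀ a, Function.Injective (nbr a)) (σ : A × L → Bool)

theorem signedAdj_bipartiteOrientation (a : A) (l : L) :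
    (bipartiteOrientation nbr hnbr σ).signedAdj (σ (a, l)) (.inl a) (.inr (nbr a l)) := by
  cases h : σ (a, l) <;> exact ⟨l, rfl, h⟩

theorem toSimpleGraph_bipartiteOrientation_adj_inl_inr {a : A} {b : B} :
    (bipartiteOrientation nbr hnbr σ).toSimpleGraph.Adj (.inl a) (.inr b) ↔
      ∃ l, nbr a l = b := by
  constructor
  · rintro (⟨l, hl, -⟩ | ⟨l, hl, -⟩) <;> exact ⟨l, hl⟩
  · rintro ⟨l, hl⟩
    cases h : σ (a, l)
    exacts [.inr ⟨l, hl, h⟩, .inl ⟨l, hl, h⟩]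

theorem toSimpleGraph_bipartiteOrientation_adj_inl_inl {a a' : A} :
    ¬ (bipartiteOrientation nbr hnbr σ).toSimpleGraph.Adj (.inl a) (.inl a') :=
  fun h => h.elim id id

theorem toSimpleGraph_bipartiteOrientation_adj_inr_inr {b b' : B} :
    ¬ (bipartiteOrientation nbr hnbr σ).toSimpleGraph.Adj (.inr b) (.inr b') :=
  fun h => h.elim id id

end Bipartite

section Circulant

variable {n Δ : ℕ}
  (hnbr : ∀ a : ZMod n, Function.Injective fun l : Fin Δ => a + ((l : ℕ) : ZMod n))
  (σ : ZMod n × Fin Δ → Bool)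

theorem connected_toSimpleGraph_bipartiteOrientation_add [NeZero n] (hΔ : 2 ≤ Δ) :
    (bipartiteOrientation _ hnbr σ).toSimpleGraph.Connected := by
  set G := (bipartiteOrientation _ hnbr σ).toSimpleGraph
  have hadj (a : ZMod n) (l : ℕ) (hl : l < Δ) : G.Adj (.inl a) (.inr (a + l)) :=
    (toSimpleGraph_bipartiteOrientation_adj_inl_inr _ _ _).mpr ⟨⟨l, hl⟩, rfl⟩
  have hright (a : ZMod n) : G.Reachable (.inl a) (.inr a) := by
    simpa using (hadj a 0 (by omega)).reachable
  have hstep (a : ZMod n) : G.Reachable (.inl a) (.inl (a + 1)) := by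
    have := (hadj a 1 (by omega)).reachable
    rw [Nat.cast_one] at this
    exact this.trans (hright (a + 1)).symm
  have hleft (k : ℕ) : G.Reachable (.inl 0) (.inl (k : ZMod n)) := by
    induction k with
    | zero => simp
    | succ k ih => simpa using ih.trans (hstep k)
  refine G.connected_iff_exists_forall_reachable.mpr ⟨.inl 0, ?_⟩
  rintro (a | a) <;> rw [← ZMod.natCast_zmod_val a]
  exacts [hleft _, (hleft _).trans (hright _)]

theorem ncard_neighborSet_toSimpleGraph_bipartiteOrientation_add_le
    (v : ZMod n ⊕ ZMod n) :
    ((bipartiteOrientation _ hnbr σ).toSimpleGraph.neighborSet v).ncard ≤ Δ := by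
  rcases v with a | b
  · have : (bipartiteOrientation _ hnbr σ).toSimpleGraph.neighborSet (.inl a) ⊆
        Set.range fun l : Fin Δ => (.inr (a + l) : ZMod n ⊕ ZMod n) := by
      rintro (a' | b) h
      · exact absurd h (toSimpleGraph_bipartiteOrientation_adj_inl_inl _ _ _)
      · obtain ⟨l, rfl⟩ := (toSimpleGraph_bipartiteOrientation_adj_inl_inr _ _ _).mp h
        exact ⟨l, rfl⟩
    simpa using Set.ncard_le_of_subset_range this
  · have : (bipartiteOrientation _ hnbr σ).toSimpleGraph.neighborSet (.inr b) ⊆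
        Set.range fun l : Fin Δ => (.inl (b - l) : ZMod n ⊕ ZMod n) := by
      rintro (a | b') h
      · obtain ⟨l, rfl⟩ := (toSimpleGraph_bipartiteOrientation_adj_inl_inr _ _ _).mp h.symm
        exact ⟨l, by simp⟩
      · exact absurd h (toSimpleGraph_bipartiteOrientation_adj_inr_inr _ _ _)
    simpa using Set.ncard_le_of_subset_range this

end Circulant

open Filter in
theorem exists_connected_orientation_lt_pushableChromatic {Δ L : ℕ} (hΔ : 2 ≤ Δ)
    (hL : 4 * L ^ 2 < 2 ^ Δ) :
    ∃ (V : Type) (_ : Fintype V) (G : OrientedGraph V), G.toSimpleGraph.Connected ∧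
      (∀ v, (G.toSimpleGraph.neighborSet v).ncard ≤ Δ) ∧ L < G.pushableChromatic := by
  obtain ⟨n, hn, hnΔ⟩ := ((Nat.eventually_mul_pow_lt_pow ((L + 1) * 2 ^ (L * L)) hL).and
    (eventually_ge_atTop Δ)).exists
  have : NeZero n := ⟨by omega⟩
  have hnbr := ZMod.add_natCast_fin_injective hnΔ
  obtain ⟨σ, hσ⟩ := exists_lt_pushableChromatic_of_card_lt (bipartiteOrientation _ hnbr)
    (fun i => .inl i.1) (fun i => .inr (i.1 + (i.2 : ℕ)))
    (fun σ i => signedAdj_bipartiteOrientation _ hnbr σ i.1 i.2) L <| by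
      calc _ ≤ (L + 1) * (2 ^ (L * L) * (2 * L) ^ (n + n)) := by
              simpa using Finset.sum_range_succ_two_pow_mul_le L (n + n)
        _ = (L + 1) * 2 ^ (L * L) * (4 * L ^ 2) ^ n := by
              rw [← two_mul, pow_mul (2 * L) 2 n]; ring
        _ < (2 ^ Δ) ^ n := hn
        _ = _ := by simp [← pow_mul, mul_comm]
  exact ⟨_, inferInstance, _, connected_toSimpleGraph_bipartiteOrientation_add _ σ hΔ,
    ncard_neighborSet_toSimpleGraph_bipartiteOrientation_add_le _ σ, hσ⟩

end OrientedGraph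

/-- For every `Δ ≥ 29`, there is a connected finite simple graph with maximum degree
at most `Δ` and an orientation of it with pushable chromatic number at least
`2^(Δ/2 - 1)`. -/
theorem pushableChromatic_lower_of_maxDegree
    (Δ : ℕ) (hΔ : 29 ≤ Δ) :
    ∃ (V : Type) (_ : Fintype V) (G : SimpleGraph V) (G' : OrientedGraph V),
      G.Connected ∧ (∀ v, (G.neighborSet v).ncard ≤ Δ) ∧ G'.toSimpleGraph = G ∧
      (2 : ℝ) ^ ((Δ : ℝ) / 2 - 1) ≤ (G'.pushableChromatic : ℝ) := by
  set x : ℝ := 2 ^ ((Δ : ℝ) / 2 - 1) with hx_def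
  have hx : 0 < x := by positivity
  have hx_sq : 4 * x ^ 2 = 2 ^ Δ := by
    rw [hx_def, Real.rpow_sub_one two_ne_zero, div_pow, ← Real.rpow_natCast,
      ← Real.rpow_mul zero_le_two]
    norm_num
    ring
  have hceil : 1 ≤ ⌈x⌉₊ := Nat.one_le_iff_ne_zero.mpr (Nat.ceil_pos.mpr hx).ne'
  have hL : ((⌈x⌉₊ - 1 : ℕ) : ℝ) < x := by
    rw [Nat.cast_sub hceil, Nat.cast_one]; linarith [Nat.ceil_lt_add_one hx.le]
  obtain ⟨V, hV, G', hconn, hdeg, hχ⟩ :=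
    OrientedGraph.exists_connected_orientation_lt_pushableChromatic (L := ⌈x⌉₊ - 1)
      (by omega : 2 ≤ Δ) <| by
        have : (4 * (⌈x⌉₊ - 1) ^ 2 : ℕ) < (2 ^ Δ : ℝ) := by
          rw [← hx_sq]; push_cast; gcongr
        exact_mod_cast this
  refine ⟨V, hV, G'.toSimpleGraph, G', hconn, hdeg, rfl, ?_⟩
  calc x ≤ ⌈x⌉₊ := Nat.le_ceil x
    _ ≤ G'.pushableChromatic := by exact_mod_cast (by omega : ⌈x⌉₊ ≤ G'.pushableChromatic)
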